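/- For all u, z ∈ ℂ such that θ(u + (1+τ)/2) ≠ 0, θ(z + (1+τ)/2) ≠ 0, θ̄(u) ≠ 0 and θ̄(z) ≠ 0, the following identity of theta quotients holds: θ′((1+τ)/2) · θ(z + u + (1+τ)/2) / (θ(u + (1+τ)/2) · θ(z + (1+τ)/2)) = θ̄′(0) · θ̄(u+z) / (θ̄(u) · θ̄(z)) = σ(u, z). -/

import Mathlib

open Complex Matrix

noncomputable section

/-- The third Jacobi theta function `θ(z) = ∑_{m ∈ ℤ} exp(πiτm² + 2πimz)`. -/
def theta3 (τ z : ℂ) : ℂ :=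
  ∑' m : ℤ, Complex.exp (Real.pi * Complex.I * τ * (m : ℂ) ^ 2 +
    2 * Real.pi * Complex.I * (m : ℂ) * z)

/-- The first Jacobi theta function
`θ̄(z) = 2 exp(πiτ/4) ∑_{m ≥ 0} (−1)^m exp(πiτ m(m+1)) sin((2m+1)πz)`. -/
def theta1 (τ z : ℂ) : ℂ :=
  2 * Complex.exp (Real.pi * Complex.I * τ / 4) *
    ∑' m : ℕ, (-1 : ℂ) ^ m * Complex.exp (Real.pi * Complex.I * τ * (m : ℂ) * ((m : ℂ) + 1)) *
      Complex.sin ((2 * (m : ℂ) + 1) * Real.pi * z)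

/-- The Kronecker elliptic function `σ(u, z) = θ̄′(0) θ̄(u+z) / (θ̄(u) θ̄(z))`. -/
def sigmaK (τ u z : ℂ) : ℂ :=
  deriv (theta1 τ) 0 * theta1 τ (u + z) / (theta1 τ u * theta1 τ z)

/-! Pairing the terms `n` and `-(n + 1)` of the series of `θ` at `z + (1 + τ) / 2` turns it
into the sine series of `θ̄`: `θ̄(z) = -i e^{πiτ/4} e^{πiz} θ(z + (1 + τ) / 2)`. In particular
`θ` vanishes at the half period `(1 + τ) / 2`, so `θ̄′(0) = -i e^{πiτ/4} θ′((1 + τ) / 2)`, and in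
the quotient `σ(u, z)` the prefactors cancel because `e^{πi(u+z)} = e^{πiu} e^{πiz}`. -/

local notation "π" => (Real.pi : ℂ)

lemma theta3_eq_jacobiTheta₂ (τ z : ℂ) : theta3 τ z = jacobiTheta₂ z τ :=
  tsum_congr fun m ↦ by rw [jacobiTheta₂_term]; ring_nf

lemma exp_mul_jacobiTheta₂_term_add_half_period (n : ℕ) (τ z : ℂ) :
    cexp (π * I * z) * jacobiTheta₂_term n (z + (1 + τ) / 2) τ =
      (-1) ^ n * cexp (π * I * τ * n * (n + 1)) * cexp ((2 * n + 1) * π * z * I) := by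
  rw [jacobiTheta₂_term, ← exp_pi_mul_I, ← exp_nat_mul, ← exp_add, ← exp_add, ← exp_add]
  congr 1
  push_cast
  ring

lemma exp_mul_jacobiTheta₂_term_neg_add_half_period (n : ℕ) (τ z : ℂ) :
    cexp (π * I * z) * jacobiTheta₂_term (-(n + 1)) (z + (1 + τ) / 2) τ =
      -((-1) ^ n * cexp (π * I * τ * n * (n + 1)) * cexp (-((2 * n + 1) * π * z) * I)) := by
  rw [jacobiTheta₂_term, ← exp_neg_pi_mul_I, ← exp_nat_mul, ← exp_add, ← exp_add, ← exp_add,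
    ← exp_sub_pi_mul_I]
  congr 1
  push_cast
  ring

lemma two_mul_theta1_summand (n : ℕ) (τ z : ℂ) :
    2 * ((-1) ^ n * cexp (π * I * τ * n * (n + 1)) * Complex.sin ((2 * n + 1) * π * z)) =
      -I * cexp (π * I * z) * (jacobiTheta₂_term n (z + (1 + τ) / 2) τ +
        jacobiTheta₂_term (-(n + 1)) (z + (1 + τ) / 2) τ) := by
  rw [mul_assoc (-I), mul_add (cexp _), exp_mul_jacobiTheta₂_term_add_half_period,
    exp_mul_jacobiTheta₂_term_neg_add_half_period, Complex.sin]
  ring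

lemma theta1_eq_mul_theta3 {τ : ℂ} (hτ : 0 < τ.im) (z : ℂ) :
    theta1 τ z = -I * cexp (π * I * τ / 4) * cexp (π * I * z) * theta3 τ (z + (1 + τ) / 2) := by
  have hsum : Summable (jacobiTheta₂_term · (z + (1 + τ) / 2) τ) :=
    (summable_jacobiTheta₂_term_iff _ τ).mpr hτ
  calc theta1 τ z = cexp (π * I * τ / 4) * ∑' n : ℕ, 2 * ((-1) ^ n *
        cexp (π * I * τ * n * (n + 1)) * Complex.sin ((2 * n + 1) * π * z)) := by
        rw [theta1, tsum_mul_left]; ring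
    _ = cexp (π * I * τ / 4) * ∑' n : ℕ, -I * cexp (π * I * z) *
        (jacobiTheta₂_term n (z + (1 + τ) / 2) τ +
          jacobiTheta₂_term (-(n + 1)) (z + (1 + τ) / 2) τ) := by
        simp only [two_mul_theta1_summand]
    _ = _ := by
        rw [tsum_mul_left, tsum_nat_add_neg_add_one hsum, ← jacobiTheta₂, ← theta3_eq_jacobiTheta₂]
        ring

lemma theta3_half_period_eq_zero {τ : ℂ} (hτ : 0 < τ.im) : theta3 τ ((1 + τ) / 2) = 0 := by
  have h := theta1_eq_mul_theta3 hτ 0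
  simp only [theta1, mul_zero, Complex.sin_zero, tsum_zero, zero_add] at h
  simpa [exp_ne_zero, I_ne_zero] using h.symm

lemma differentiableAt_theta3 {τ : ℂ} (hτ : 0 < τ.im) (z : ℂ) :
    DifferentiableAt ℂ (theta3 τ) z := by
  simpa only [funext (theta3_eq_jacobiTheta₂ τ)] using differentiableAt_jacobiTheta₂_fst z hτ

lemma deriv_theta1_zero {τ : ℂ} (hτ : 0 < τ.im) :
    deriv (theta1 τ) 0 = -I * cexp (π * I * τ / 4) * deriv (theta3 τ) ((1 + τ) / 2) := by
  have hθ₃ : HasDerivAt (fun w ↦ theta3 τ (w + (1 + τ) / 2)) (deriv (theta3 τ) ((1 + τ) / 2)) 0 := by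
    simpa using (differentiableAt_theta3 hτ (0 + (1 + τ) / 2)).hasDerivAt.comp_add_const 0 _
  have hexp : HasDerivAt (fun w ↦ cexp (π * I * w)) (π * I) 0 := by
    simpa using ((hasDerivAt_id (0 : ℂ)).const_mul (π * I)).cexp
  rw [funext (theta1_eq_mul_theta3 hτ)]
  simpa [theta3_half_period_eq_zero hτ, mul_assoc] using
    ((hexp.mul hθ₃).const_mul (-I * cexp (π * I * τ / 4))).deriv

theorem stmt10_general (τ : ℂ) (hτ : 0 < τ.im) (u z : ℂ) :
    deriv (theta3 τ) ((1 + τ) / 2) * theta3 τ (z + u + (1 + τ) / 2) /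
        (theta3 τ (u + (1 + τ) / 2) * theta3 τ (z + (1 + τ) / 2)) = sigmaK τ u z ∧
      deriv (theta1 τ) 0 * theta1 τ (u + z) / (theta1 τ u * theta1 τ z) = sigmaK τ u z := by
  refine ⟨?_, rfl⟩
  set k := -I * cexp (π * I * τ / 4)
  have hk : k ≠ 0 := mul_ne_zero (neg_ne_zero.mpr I_ne_zero) (exp_ne_zero _)
  have hK : k * k * (cexp (π * I * u) * cexp (π * I * z)) ≠ 0 :=
    mul_ne_zero (mul_ne_zero hk hk) (mul_ne_zero (exp_ne_zero _) (exp_ne_zero _))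
  rw [sigmaK, deriv_theta1_zero hτ, theta1_eq_mul_theta3 hτ, theta1_eq_mul_theta3 hτ u,
    theta1_eq_mul_theta3 hτ z, add_comm z u, mul_add, exp_add, ← mul_div_mul_left _ _ hK]
  ring

/-- The identity of theta quotients expressing the Kronecker elliptic function
through the third Jacobi theta function. -/
theorem stmt10 (τ : ℂ) (hτ : 0 < τ.im) (u z : ℂ)
    (h1 : theta3 τ (u + (1 + τ) / 2) ≠ 0) (h2 : theta3 τ (z + (1 + τ) / 2) ≠ 0)
    (h3 : theta1 τ u ≠ 0) (h4 : theta1 τ z ≠ 0) :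
    deriv (theta3 τ) ((1 + τ) / 2) * theta3 τ (z + u + (1 + τ) / 2) /
        (theta3 τ (u + (1 + τ) / 2) * theta3 τ (z + (1 + τ) / 2)) = sigmaK τ u z ∧
      deriv (theta1 τ) 0 * theta1 τ (u + z) / (theta1 τ u * theta1 τ z) = sigmaK τ u z :=
  stmt10_general τ hτ u z
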